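/- arXiv:1602.00133 — 2 statements merged into one kernel-verified Lean document; each statement's English description precedes it below -/
import Mathlib

section
/- Let E be a real inner product space and let f_1,…,f_n : E → ℝ be differentiable with P(w) = (1/n) ∑_{i=1}^n f_i(w). Assume each gradient map is L-Lipschitz, i.e. ‖∇f_i(a) − ∇f_i(b)‖ ≤ L‖a − b‖ for all a, b and all i, and assume ∇P(w*) = 0. Let D ⊆ {1,…,n} be a block of size q, let w_t ∈ E, set z = ∇P(w_t), and let c ≥ 0. Then for every u ∈ E: (1/q) ∑_{i∈D} ‖∇f_i(u) − ∇f_i(w_t) + z + c·(u − w_t)‖² ≤ 3(L² + c²)‖u − w_t‖² + 3L²‖w_t − w*‖². -/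
/-!
Split `v` into `(∇f_i(u) − ∇f_i(w_t)) + z + c(u − w_t)` and use `‖a + b + d‖² ≤ 3(‖a‖² + ‖b‖² + ‖d‖²)`.
The first piece is bounded by smoothness; since `∇P(w*) = 0`, `z = ∇P(w_t) − ∇P(w*)` is the mean of
the differences `∇f_i(w_t) − ∇f_i(w*)`, each bounded by `L‖w_t − w*‖`.
-/

open Finset

lemma Finset.one_div_card_mul_sum_le {ι : Type*} {s : Finset ι} {g : ι → ℝ} {B : ℝ}
    (hB : 0 ≤ B) (h : ∀ i ∈ s, g i ≤ B) : (1 / #s : ℝ) * ∑ i ∈ s, g i ≤ B := by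
  rw [one_div_mul_eq_div, ← expect_eq_sum_div_card]
  obtain rfl | hs := s.eq_empty_or_nonempty
  · simpa using hB
  · exact expect_le hs h

lemma norm_one_div_card_smul_sum_le {ι E : Type*} [SeminormedAddCommGroup E] [NormedSpace ℝ E]
    {s : Finset ι} {x : ι → E} {B : ℝ} (hB : 0 ≤ B) (h : ∀ i ∈ s, ‖x i‖ ≤ B) :
    ‖(1 / #s : ℝ) • ∑ i ∈ s, x i‖ ≤ B :=
  calc ‖(1 / #s : ℝ) • ∑ i ∈ s, x i‖ ≤ (1 / #s : ℝ) * ∑ i ∈ s, ‖x i‖ := by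
        rw [norm_smul, Real.norm_of_nonneg (by positivity)]
        gcongr
        exact norm_sum_le _ _
    _ ≤ B := one_div_card_mul_sum_le hB h

lemma norm_add_add_sq_le {E : Type*} [SeminormedAddGroup E] (a b d : E) :
    ‖a + b + d‖ ^ 2 ≤ 3 * (‖a‖ ^ 2 + ‖b‖ ^ 2 + ‖d‖ ^ 2) := by
  have h : ‖a + b + d‖ ≤ ‖a‖ + ‖b‖ + ‖d‖ := norm_add₃_le
  nlinarith [norm_nonneg (a + b + d), sq_nonneg (‖a‖ - ‖b‖), sq_nonneg (‖a‖ - ‖d‖),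
    sq_nonneg (‖b‖ - ‖d‖)]

lemma gradient_const_mul_sum {ι E : Type*} [NormedAddCommGroup E] [InnerProductSpace ℝ E]
    [CompleteSpace E] {s : Finset ι} {f : ι → E → ℝ} {x : E}
    (hf : ∀ i ∈ s, DifferentiableAt ℝ (f i) x) (a : ℝ) :
    gradient (fun w => a * ∑ i ∈ s, f i w) x = a • ∑ i ∈ s, gradient (f i) x := by
  have hsum : fderiv ℝ (fun w => ∑ i ∈ s, f i w) x = ∑ i ∈ s, fderiv ℝ (f i) x :=
    fderiv_fun_sum hf
  simp only [gradient, fderiv_const_mul (DifferentiableAt.fun_sum hf) a, hsum, map_smul, map_sum]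

theorem scope_variance_bound_general
    {E : Type*} [NormedAddCommGroup E] [InnerProductSpace ℝ E] [CompleteSpace E]
    (n : ℕ) (f : Fin n → E → ℝ) (hf : ∀ i, Differentiable ℝ (f i))
    (P : E → ℝ) (hP : P = fun w => (1 / n : ℝ) * ∑ i, f i w)
    (L : ℝ)
    (hL : ∀ i, ∀ a b : E, ‖gradient (f i) a - gradient (f i) b‖ ≤ L * ‖a - b‖)
    (wstar : E) (hstar : gradient P wstar = 0)
    (D : Finset (Fin n)) (q : ℕ) (hq : (q : ℕ) = D.card)
    (wt z : E) (hz : z = gradient P wt) (c : ℝ) (u : E) :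
    (1 / q : ℝ) * ∑ i ∈ D,
        ‖gradient (f i) u - gradient (f i) wt + z + c • (u - wt)‖ ^ 2
      ≤ 3 * (L ^ 2 + c ^ 2) * ‖u - wt‖ ^ 2 + 3 * L ^ 2 * ‖wt - wstar‖ ^ 2 := by
  subst hq
  have hL' : ∀ i a b, ‖gradient (f i) a - gradient (f i) b‖ ≤ |L| * ‖a - b‖ := fun i a b =>
    (hL i a b).trans (by gcongr; exact le_abs_self L)
  have hgrad : ∀ w, gradient P w = (1 / #(univ : Finset (Fin n)) : ℝ) • ∑ i, gradient (f i) w := by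
    intro w
    rw [hP, card_univ, Fintype.card_fin]
    exact gradient_const_mul_sum (fun i _ => (hf i).differentiableAt) _
  have hz_le : ‖z‖ ≤ |L| * ‖wt - wstar‖ := by
    rw [hz, ← sub_zero (gradient P wt), ← hstar, hgrad, hgrad, ← smul_sub, ← sum_sub_distrib]
    exact norm_one_div_card_smul_sum_le (by positivity) fun i _ => hL' i wt wstar
  refine one_div_card_mul_sum_le (by positivity) fun i _ => ?_
  calc ‖gradient (f i) u - gradient (f i) wt + z + c • (u - wt)‖ ^ 2
      ≤ 3 * (‖gradient (f i) u - gradient (f i) wt‖ ^ 2 + ‖z‖ ^ 2 + ‖c • (u - wt)‖ ^ 2) :=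
        norm_add_add_sq_le _ _ _
    _ ≤ 3 * ((|L| * ‖u - wt‖) ^ 2 + (|L| * ‖wt - wstar‖) ^ 2 + (|c| * ‖u - wt‖) ^ 2) := by
        rw [norm_smul, Real.norm_eq_abs]
        gcongr
        exact hL' i u wt
    _ = 3 * (L ^ 2 + c ^ 2) * ‖u - wt‖ ^ 2 + 3 * L ^ 2 * ‖wt - wstar‖ ^ 2 := by
        simp only [mul_pow, sq_abs]
        ring

/-- Lemma 3 of SCOPE: variance bound for the local stochastic
gradient v = ∇f_i(u) − ∇f_i(w_t) + z + c(u − w_t). -/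
theorem scope_variance_bound
    {E : Type*} [NormedAddCommGroup E] [InnerProductSpace ℝ E] [CompleteSpace E]
    (n : ℕ) (f : Fin n → E → ℝ) (hf : ∀ i, Differentiable ℝ (f i))
    (P : E → ℝ) (hP : P = fun w => (1 / n : ℝ) * ∑ i, f i w)
    (L : ℝ)
    (hL : ∀ i, ∀ a b : E, ‖gradient (f i) a - gradient (f i) b‖ ≤ L * ‖a - b‖)
    (wstar : E) (hstar : gradient P wstar = 0)
    (D : Finset (Fin n)) (hD : D.Nonempty) (q : ℕ) (hq : (q : ℕ) = D.card)
    (wt z : E) (hz : z = gradient P wt) (c : ℝ) (hc : 0 ≤ c) (u : E) :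
    (1 / q : ℝ) * ∑ i ∈ D,
        ‖gradient (f i) u - gradient (f i) wt + z + c • (u - wt)‖ ^ 2
      ≤ 3 * (L ^ 2 + c ^ 2) * ‖u - wt‖ ^ 2 + 3 * L ^ 2 * ‖wt - wstar‖ ^ 2 :=
  scope_variance_bound_general n f hf P hP L hL wstar hstar D q hq wt z hz c u
end

section
/- Let E be a real inner product space and let F : E → ℝ be differentiable and μ-strongly convex, i.e. F(a) ≥ F(b) + ⟪∇F(b), a − b⟫ + (μ/2)‖a − b‖² for all a, b ∈ E with μ > 0. Then for any u, w_t, w*, z ∈ E and any c ≥ 0: ⟪∇F(u) − ∇F(w_t) + z + c·(u − w_t), u − w*⟫ ≥ F(w_t) − F(w*) + ((μ+c)/2)‖u − w*‖² + ((μ+c)/2)‖u − w_t‖² + ⟪z, u − w_t⟫ + ⟪z − ∇F(w_t), w_t − w*⟫ − (c/2)‖w_t − w*‖². -/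
open scoped InnerProductSpace

/-- inner-product lower bound from the proof of Lemma 1 of SCOPE,
for a μ-strongly convex differentiable F. -/
theorem scope_inner_product_lower_bound
    {E : Type*} [NormedAddCommGroup E] [InnerProductSpace ℝ E] [CompleteSpace E]
    (F : E → ℝ) (hF : Differentiable ℝ F) (μ : ℝ) (hμ : 0 < μ)
    (hsc : ∀ a b : E,
      F a ≥ F b + ⟪gradient F b, a - b⟫_ℝ + (μ / 2) * ‖a - b‖ ^ 2)
    (u wt wstar z : E) (c : ℝ) (hc : 0 ≤ c) :
    ⟪gradient F u - gradient F wt + z + c • (u - wt), u - wstar⟫_ℝ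
      ≥ F wt - F wstar + ((μ + c) / 2) * ‖u - wstar‖ ^ 2
        + ((μ + c) / 2) * ‖u - wt‖ ^ 2 + ⟪z, u - wt⟫_ℝ
        + ⟪z - gradient F wt, wt - wstar⟫_ℝ - (c / 2) * ‖wt - wstar‖ ^ 2 := by
  have h1 := hsc wstar u
  have h2 := hsc u wt
  have hsplit : u - wstar = (u - wt) + (wt - wstar) := by abel
  have e1 : ⟪gradient F u - gradient F wt + z + c • (u - wt), u - wstar⟫_ℝ
      = ⟪gradient F u, u - wstar⟫_ℝ - ⟪gradient F wt, u - wt⟫_ℝ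
        - ⟪gradient F wt, wt - wstar⟫_ℝ + ⟪z, u - wt⟫_ℝ + ⟪z, wt - wstar⟫_ℝ
        + c * ⟪u - wt, u - wstar⟫_ℝ := by
    rw [inner_add_left, inner_add_left, inner_sub_left, real_inner_smul_left]
    simp only [hsplit, inner_add_right]
    ring
  have e2 : ⟪u - wt, u - wstar⟫_ℝ
      = (‖u - wt‖ ^ 2 + ‖u - wstar‖ ^ 2 - ‖wt - wstar‖ ^ 2) / 2 := by
    have h := @norm_sub_sq_real E _ _ (u - wt) (u - wstar)
    have h3 : (u - wt) - (u - wstar) = wstar - wt := by abel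
    rw [h3, norm_sub_rev] at h
    linarith
  have e3 : ⟪gradient F u, wstar - u⟫_ℝ = -⟪gradient F u, u - wstar⟫_ℝ := by
    rw [show wstar - u = -(u - wstar) by abel, inner_neg_right]
  have e4 : ⟪z - gradient F wt, wt - wstar⟫_ℝ
      = ⟪z, wt - wstar⟫_ℝ - ⟪gradient F wt, wt - wstar⟫_ℝ := by
    rw [inner_sub_left]
  have hn : ‖wstar - u‖ = ‖u - wstar‖ := norm_sub_rev _ _
  rw [e3, hn] at h1
  rw [e1, e2, e4]
  nlinarith [sq_nonneg ‖u - wstar‖, sq_nonneg ‖u - wt‖]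
end
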